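/- Let Û and U be two n×K real matrices such that U contains exactly K distinct rows, let δ be the minimum Euclidean distance between two distinct rows of U, and let g be the membership vector assigning each row index of U to its row value; assume each of the K row values occurs at least π₀n times for a constant π₀ > 0. Let ĝ be the output of a k-median clustering algorithm applied to the rows of Û whose objective value is within a constant factor of the global optimum. If ‖Û − U‖_{2,1} ≤ c·n·δ for a small enough constant c, then after an appropriate permutation of cluster labels, ĝ agrees with g on all but at most c⁻¹‖Û − U‖_{2,1}·δ⁻¹ row indices, where ‖M‖_{2,1} denotes the sum of the ℓ₂ norms of the rows of M. -/

import Mathlib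

/-!
STATEMENT 12: k-median mis-clustering bound.  If `U` has exactly `K` distinct rows
(centers `μ`, membership `g`), every community has size at least `π₀ n`, `δ` is the
minimum distance between distinct rows of `U`, `‖Û − U‖_{2,1} ≤ c n δ` for a small
enough constant `c`, and `ĝ` is the labelling of an approximate (constant-factor `a`)
k-median solution on the rows of `Û`, then after a label permutation `ĝ` agrees with `g`
on all but at most `c⁻¹ ‖Û − U‖_{2,1} δ⁻¹` row indices.
-/

noncomputable section

/-- Euclidean norm of a finitely indexed real vector. -/
def l2 {ι : Type*} [Fintype ι] (v : ι → ℝ) : ℝ := Real.sqrt (∑ i, v i ^ 2)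

/-- The (2,1)-norm of a matrix: the sum of the Euclidean norms of its rows. -/
def norm21 {m n : Type*} [Fintype m] [Fintype n] (M : Matrix m n ℝ) : ℝ :=
  ∑ i, l2 (M i)

/-- `ghat` is the labelling of a k-median clustering of the rows of `U` whose objective
value is within a factor `a` of the global optimum. -/
def IsApproxKMedian {n' : Type*} [Fintype n'] (Kt : ℕ) (a : ℝ)
    (U : Matrix n' (Fin Kt) ℝ) (ghat : n' → Fin Kt) : Prop :=
  ∃ cen : Fin Kt → Fin Kt → ℝ,
    ∀ (g' : n' → Fin Kt) (cen' : Fin Kt → Fin Kt → ℝ),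
      ∑ i, l2 (U i - cen (ghat i)) ≤ a * ∑ i, l2 (U i - cen' (g' i))


/-!
The rows of `U` take only the `K` values `μ k`, which are pairwise at distance at least `δ`.
Comparing the approximate k-median solution with the competitor whose centers are the `μ k`
bounds its cost on the rows of `U` by `(1 + a) ‖Û − U‖_{2,1}`, so by Markov's inequality at most
`2 (1 + a) ‖Û − U‖_{2,1} / δ` rows lie at distance `≥ δ / 2` from their assigned center. Every
other row identifies its center with a unique `μ k`. Since this exceptional set is smaller than
every community, each `μ k` is identified with some center, so the identification is a
permutation of labels, and it can err only on the exceptional rows.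
-/

open Finset

lemma l2_eq_norm {ι : Type*} [Fintype ι] (v : ι → ℝ) : l2 v = ‖WithLp.toLp 2 v‖ := by
  simp [l2, EuclideanSpace.norm_eq, sq_abs]

lemma l2_nonneg {ι : Type*} [Fintype ι] (v : ι → ℝ) : 0 ≤ l2 v := by
  rw [l2_eq_norm]
  exact norm_nonneg _

lemma l2_pos {ι : Type*} [Fintype ι] {v : ι → ℝ} (hv : v ≠ 0) : 0 < l2 v := by
  rw [l2_eq_norm, norm_pos_iff]
  simpa using hv

lemma l2_sub_comm {ι : Type*} [Fintype ι] (u v : ι → ℝ) : l2 (u - v) = l2 (v - u) := by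
  simp only [l2_eq_norm, WithLp.toLp_sub, norm_sub_rev]

lemma l2_sub_le_l2_sub_add_l2_sub {ι : Type*} [Fintype ι] (u v w : ι → ℝ) :
    l2 (u - w) ≤ l2 (u - v) + l2 (v - w) := by
  simp only [l2_eq_norm, WithLp.toLp_sub]
  exact norm_sub_le_norm_sub_add_norm_sub _ _ _

lemma norm21_sub {m ι : Type*} [Fintype m] [Fintype ι] (A B : Matrix m ι ℝ) :
    norm21 (A - B) = ∑ i, l2 (A i - B i) :=
  rfl

lemma norm21_nonneg {m ι : Type*} [Fintype m] [Fintype ι] (A : Matrix m ι ℝ) : 0 ≤ norm21 A :=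
  sum_nonneg fun _ _ => l2_nonneg _

lemma card_filter_le_sum_div {ι : Type*} (s : Finset ι) {f : ι → ℝ} (hf : ∀ i ∈ s, 0 ≤ f i)
    {t : ℝ} (ht : 0 < t) : ((s.filter fun i => t ≤ f i).card : ℝ) ≤ (∑ i ∈ s, f i) / t := by
  rw [le_div_iff₀ ht, ← nsmul_eq_mul]
  calc (s.filter fun i => t ≤ f i).card • t ≤ ∑ i ∈ s.filter fun i => t ≤ f i, f i :=
        card_nsmul_le_sum _ _ _ fun i hi => (mem_filter.1 hi).2
    _ ≤ ∑ i ∈ s, f i :=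
        sum_le_sum_of_subset_of_nonneg (filter_subset _ _) fun i hi _ => hf i hi

lemma eq_of_l2_sub_lt_half {ι κ : Type*} [Fintype ι] {μ : κ → ι → ℝ} {δ : ℝ}
    (hsep : ∀ k k', k ≠ k' → δ ≤ l2 (μ k - μ k')) {x : ι → ℝ} {k k' : κ}
    (hk : l2 (μ k - x) < δ / 2) (hk' : l2 (μ k' - x) < δ / 2) : k = k' := by
  by_contra hne
  have := l2_sub_le_l2_sub_add_l2_sub (μ k) x (μ k')
  rw [l2_sub_comm x] at this
  linarith [hsep k k' hne]

lemma exists_label_of_l2_sub_lt_half {ι κ : Type*} [Fintype ι]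
    {μ : κ → ι → ℝ} {δ : ℝ} (hsep : ∀ k k', k ≠ k' → δ ≤ l2 (μ k - μ k')) (x : κ → ι → ℝ) :
    ∃ τ : κ → κ, ∀ ℓ k, l2 (μ k - x ℓ) < δ / 2 → τ ℓ = k := by
  classical
  refine ⟨fun ℓ => if h : ∃ k, l2 (μ k - x ℓ) < δ / 2 then h.choose else ℓ,
    fun ℓ k hk => ?_⟩
  have h : ∃ k, l2 (μ k - x ℓ) < δ / 2 := ⟨k, hk⟩
  simp only [dif_pos h]
  exact eq_of_l2_sub_lt_half hsep h.choose_spec hk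

lemma exists_perm_card_filter_ne_le {ι κ : Type*} [Fintype ι] [Finite κ] [DecidableEq κ]
    (g ghat : ι → κ) (τ : κ → κ) (B : Finset ι) (hτ : ∀ i ∉ B, τ (ghat i) = g i)
    (hB : ∀ k, B.card < (univ.filter fun i => g i = k).card) :
    ∃ σ : Equiv.Perm κ, (univ.filter fun i => σ (ghat i) ≠ g i).card ≤ B.card := by
  have hsurj : Function.Surjective τ := by
    intro k
    obtain ⟨i, hik, hiB⟩ := not_subset.1 fun h => (card_le_card h).not_gt (hB k)
    exact ⟨ghat i, (hτ i hiB).trans (mem_filter.1 hik).2⟩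
  refine ⟨Equiv.ofBijective τ (Finite.surjective_iff_bijective.1 hsurj), card_le_card ?_⟩
  intro i hi
  by_contra hiB
  exact (mem_filter.1 hi).2 (hτ i hiB)

section KMedian

variable {ι : Type*} [Fintype ι] {K : ℕ}

theorem sum_l2_sub_approxKMedian_center_le {a : ℝ} {Uhat U : Matrix ι (Fin K) ℝ}
    {μ : Fin K → Fin K → ℝ} {g ghat : ι → Fin K} {cen : Fin K → Fin K → ℝ}
    (hU : ∀ i, U i = μ (g i))
    (hcen : ∀ (g' : ι → Fin K) (cen' : Fin K → Fin K → ℝ),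
      ∑ i, l2 (Uhat i - cen (ghat i)) ≤ a * ∑ i, l2 (Uhat i - cen' (g' i))) :
    ∑ i, l2 (U i - cen (ghat i)) ≤ (1 + a) * norm21 (Uhat - U) := by
  have hopt : ∑ i, l2 (Uhat i - cen (ghat i)) ≤ a * norm21 (Uhat - U) := by
    simpa only [norm21_sub, hU] using hcen g μ
  calc ∑ i, l2 (U i - cen (ghat i))
      ≤ ∑ i, (l2 (Uhat i - U i) + l2 (Uhat i - cen (ghat i))) := by
        refine sum_le_sum fun i _ => ?_
        rw [l2_sub_comm (Uhat i)]
        exact l2_sub_le_l2_sub_add_l2_sub _ _ _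
    _ ≤ (1 + a) * norm21 (Uhat - U) := by
        rw [sum_add_distrib, ← norm21_sub]
        linarith

theorem card_far_from_approxKMedian_center_le {a δ : ℝ} (hδ : 0 < δ)
    {Uhat U : Matrix ι (Fin K) ℝ} {μ : Fin K → Fin K → ℝ} {g ghat : ι → Fin K}
    {cen : Fin K → Fin K → ℝ} (hU : ∀ i, U i = μ (g i))
    (hcen : ∀ (g' : ι → Fin K) (cen' : Fin K → Fin K → ℝ),
      ∑ i, l2 (Uhat i - cen (ghat i)) ≤ a * ∑ i, l2 (Uhat i - cen' (g' i))) :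
    ((univ.filter fun i => δ / 2 ≤ l2 (U i - cen (ghat i))).card : ℝ) ≤
      2 * (1 + a) * norm21 (Uhat - U) / δ := by
  calc _ ≤ (∑ i, l2 (U i - cen (ghat i))) / (δ / 2) :=
        card_filter_le_sum_div _ (fun _ _ => l2_nonneg _) (by positivity)
    _ ≤ (1 + a) * norm21 (Uhat - U) / (δ / 2) := by
        gcongr
        exact sum_l2_sub_approxKMedian_center_le hU hcen
    _ = 2 * (1 + a) * norm21 (Uhat - U) / δ := by
        field_simp

theorem exists_perm_card_misclustered_le {a δ : ℝ} (hδ : 0 < δ) {Uhat U : Matrix ι (Fin K) ℝ}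
    {μ : Fin K → Fin K → ℝ} (hsep : ∀ k k', k ≠ k' → δ ≤ l2 (μ k - μ k')) {g ghat : ι → Fin K}
    (hU : ∀ i, U i = μ (g i)) (hKM : IsApproxKMedian K a Uhat ghat)
    (hsmall : ∀ k, 2 * (1 + a) * norm21 (Uhat - U) / δ < (univ.filter fun i => g i = k).card) :
    ∃ σ : Equiv.Perm (Fin K),
      ((univ.filter fun i => σ (ghat i) ≠ g i).card : ℝ) ≤ 2 * (1 + a) * norm21 (Uhat - U) / δ := by
  obtain ⟨cen, hcen⟩ := hKM
  set B := univ.filter fun i => δ / 2 ≤ l2 (U i - cen (ghat i))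
  have hB : (B.card : ℝ) ≤ 2 * (1 + a) * norm21 (Uhat - U) / δ :=
    card_far_from_approxKMedian_center_le hδ hU hcen
  obtain ⟨τ, hτ⟩ := exists_label_of_l2_sub_lt_half hsep cen
  obtain ⟨σ, hσ⟩ := exists_perm_card_filter_ne_le g ghat τ B
    (fun i hi => hτ _ _ (by simpa [B, hU] using hi))
    (fun k => by exact_mod_cast hB.trans_lt (hsmall k))
  exact ⟨σ, (Nat.cast_le.2 hσ).trans hB⟩

end KMedian

theorem kmedian_misclustering_bound (a : ℝ) (ha : 1 ≤ a) (π₀ : ℝ) (hπ₀ : 0 < π₀) :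
    ∃ c₀ : ℝ, 0 < c₀ ∧ ∀ c : ℝ, 0 < c → c ≤ c₀ →
      ∀ (n K : ℕ) (Uhat U : Matrix (Fin n) (Fin K) ℝ)
        (μ : Fin K → Fin K → ℝ) (g : Fin n → Fin K) (δ : ℝ) (ghat : Fin n → Fin K),
        Function.Injective μ → Function.Surjective g →
        (∀ i, U i = μ (g i)) →
        (∀ k : Fin K, π₀ * n ≤ ((Finset.univ.filter fun i : Fin n => g i = k).card : ℝ)) →
        IsLeast {d : ℝ | ∃ k k', k ≠ k' ∧ d = l2 (μ k - μ k')} δ →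
        norm21 (Uhat - U) ≤ c * n * δ →
        IsApproxKMedian K a Uhat ghat →
        ∃ σ : Equiv.Perm (Fin K),
          ((Finset.univ.filter fun i => σ (ghat i) ≠ g i).card : ℝ) ≤
            c⁻¹ * norm21 (Uhat - U) / δ := by
  have ha₀ : 0 < 1 + a := by linarith
  refine ⟨min (1 / (2 * (1 + a))) (π₀ / (4 * (1 + a))), by positivity, ?_⟩
  intro c hc hc₀ n K Uhat U μ g δ ghat hμ hg hU hsize hδ hS hKM
  obtain ⟨⟨k₀, k₁, hk, hδ_eq⟩, hδ_min⟩ := hδ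
  have hδ₀ : 0 < δ := hδ_eq ▸ l2_pos (sub_ne_zero.2 (hμ.ne hk))
  have hn : (0 : ℝ) < n := by exact_mod_cast (hg k₀).choose.pos
  have hc_inv : 2 * (1 + a) ≤ c⁻¹ := by
    rw [le_inv_comm₀ (by positivity) hc, ← one_div]
    exact hc₀.trans (min_le_left _ _)
  have hc_π : 2 * (1 + a) * c ≤ π₀ / 2 := by
    have := hc₀.trans (min_le_right _ _)
    rw [le_div_iff₀ (by positivity)] at this
    linarith
  have hsmall : 2 * (1 + a) * norm21 (Uhat - U) / δ < π₀ * n := by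
    rw [div_lt_iff₀ hδ₀]
    calc 2 * (1 + a) * norm21 (Uhat - U) ≤ 2 * (1 + a) * c * (n * δ) := by
          rw [mul_assoc _ c]; gcongr; linarith
      _ ≤ π₀ / 2 * (n * δ) := by gcongr
      _ < π₀ * n * δ := by nlinarith [mul_pos hπ₀ (mul_pos hn hδ₀)]
  obtain ⟨σ, hσ⟩ := exists_perm_card_misclustered_le hδ₀ (fun k k' h => hδ_min ⟨k, k', h, rfl⟩)
    hU hKM fun k => hsmall.trans_le (hsize k)
  have := norm21_nonneg (Uhat - U)
  exact ⟨σ, hσ.trans (by gcongr)⟩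

end
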